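/- Let N be an odd positive integer and λ ≥ 0. Suppose unitaries U_T on ℂ^N satisfy U_T·A(v)·U_T† = A(T(v)) for all v ∈ (ZMod N)² and all T in the Margulis set 𝒮, and let Λ_N(ρ) = (1/8)·Σ_{T∈𝒮} U_T·ρ·U_T†. If the classical Margulis walk operator M_N satisfies ‖M_N f‖₂ ≤ λ·‖f‖₂ for every function f : (ZMod N)² → ℂ with Σ_v f(v) = 0, then for every N×N complex matrix X with tr(X) = 0 one has ‖Λ_N(X)‖_HS ≤ λ·‖X‖_HS, where ‖·‖_HS denotes the Hilbert–Schmidt (Frobenius) norm. In other words, Λ_N is an (N, 8, λ)-quantum expander. -/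

import Mathlib

/-!
The phase space operators form a tight frame for the Hilbert–Schmidt space: for every matrix
`X`, `∑ᵥ tr (A(v) X) = N · tr X` and `∑ᵥ |tr (A(v) X)|² = N · ‖X‖²_HS`. Both follow because, for
fixed `q`, `p ↦ tr (A(p,q) X)` is the discrete Fourier transform of the antidiagonal
`k ↦ X(2q - k, k)` at frequency `2p`, and `2` is invertible modulo the odd number `N`.
Covariance `U_T A(v) U_T† = A(T v)` then shows that the unnormalised Wigner function
`v ↦ tr (A(v) X)` of `Λ_N(X)` is the classical walk `M_N` applied to that of `X`. A traceless `X`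
has a mean-zero Wigner function, so the `ℓ²` contraction of `M_N` becomes the Hilbert–Schmidt
contraction of `Λ_N`.
-/

open Matrix BigOperators

noncomputable section

/-- `ω = exp(2πi/N)`, a primitive `N`-th root of unity. -/
def omegaN (N : ℕ) : ℂ := Complex.exp (2 * Real.pi * Complex.I / N)

/-- The shift operator `x(q)|k⟩ = |k+q⟩`. -/
def shiftOp (N : ℕ) [NeZero N] (q : ZMod N) : Matrix (ZMod N) (ZMod N) ℂ :=
  Matrix.of fun k l => if k = l + q then 1 else 0

/-- The boost operator `z(p)|k⟩ = ω^{pk}|k⟩`. -/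
def boostOp (N : ℕ) [NeZero N] (p : ZMod N) : Matrix (ZMod N) (ZMod N) ℂ :=
  Matrix.diagonal fun k => omegaN N ^ (p * k).val

/-- The Weyl operator `w(p,q) = ω^{−2⁻¹pq} z(p) x(q)`. -/
def weylOp (N : ℕ) [NeZero N] (p q : ZMod N) : Matrix (ZMod N) (ZMod N) ℂ :=
  omegaN N ^ ((-(2⁻¹ : ZMod N) * p * q).val) • (boostOp N p * shiftOp N q)

/-- The parity operator `A(0,0)|x⟩ = |−x⟩`. -/
def parityOp (N : ℕ) [NeZero N] : Matrix (ZMod N) (ZMod N) ℂ :=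
  Matrix.of fun k l => if k = -l then 1 else 0

/-- The phase space operators `A(p,q) = w(p,q) A(0,0) w(p,q)†`. -/
def phaseOp (N : ℕ) [NeZero N] (a : ZMod N × ZMod N) : Matrix (ZMod N) (ZMod N) ℂ :=
  weylOp N a.1 a.2 * parityOp N * (weylOp N a.1 a.2)ᴴ

/-- The discrete Wigner function `W_X(v) = (1/N)·tr(A(v)·X)`. -/
def wigner (N : ℕ) [NeZero N] (X : Matrix (ZMod N) (ZMod N) ℂ) (v : ZMod N × ZMod N) : ℂ :=
  (1 / (N : ℂ)) * (phaseOp N v * X).trace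

/-- The eight Margulis transformations, over any commutative ring.
Indices 0–3 are `T₁(v) = S₁v`, `T₂(v) = S₁v + (1,0)ᵀ`, `T₃(v) = S₂v`,
`T₄(v) = S₂v − (0,1)ᵀ` with `S₁ = [[1,2],[0,1]]`, `S₂ = [[1,0],[2,1]]`;
indices 4–7 are their respective inverses. -/
def marg {R : Type*} [CommRing R] : Fin 8 → R × R → R × R
  | 0 => fun v => (v.1 + 2 * v.2, v.2)
  | 1 => fun v => (v.1 + 2 * v.2 + 1, v.2)
  | 2 => fun v => (v.1, v.2 + 2 * v.1)
  | 3 => fun v => (v.1, v.2 + 2 * v.1 - 1)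
  | 4 => fun v => (v.1 - 2 * v.2, v.2)
  | 5 => fun v => (v.1 - 2 * v.2 - 1, v.2)
  | 6 => fun v => (v.1, v.2 - 2 * v.1)
  | 7 => fun v => (v.1, v.2 - 2 * v.1 + 1)

/-- The inverse of the `i`-th Margulis transformation (the family is closed under
inverses: `marg (i+4)` is the inverse of `marg i`). -/
def margInv {R : Type*} [CommRing R] (i : Fin 8) : R × R → R × R := marg (i + 4)

/-- The Hilbert–Schmidt (Frobenius) norm of a complex matrix. -/
def hsNorm {n : Type*} [Fintype n] (X : Matrix n n ℂ) : ℝ :=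
  Real.sqrt (∑ i, ∑ j, ‖X i j‖ ^ 2)

open Finset Function

namespace AddChar

variable {R K ι : Type*} [CommRing R] [Fintype R] [RCLike K] [Fintype ι] {ψ : AddChar R K}

theorem sum_sum_apply_mul_comp_mul (hψ : ψ.IsPrimitive) {c : ι → R} (hc : Injective c)
    {i₀ : ι} (hi₀ : c i₀ = 0) (g : ι → K) :
    ∑ p, ∑ k, ψ (p * c k) * g k = Fintype.card R * g i₀ := by
  classical
  rw [sum_comm]
  simp_rw [← sum_mul, sum_mulShift _ hψ, ← hi₀, hc.eq_iff]
  simp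

theorem sum_norm_sq_sum_apply_mul_comp_mul (hψ : ψ.IsPrimitive) {c : ι → R} (hc : Injective c)
    (g : ι → K) :
    ∑ p, ‖∑ k, ψ (p * c k) * g k‖ ^ 2 = Fintype.card R * ∑ k, ‖g k‖ ^ 2 := by
  classical
  apply RCLike.ofReal_injective (K := K)
  push_cast
  simp_rw [← RCLike.mul_conj, map_sum, map_mul, ← map_neg_eq_conj, sum_mul_sum, mul_sum]
  calc ∑ p, ∑ k, ∑ k', ψ (p * c k) * g k * (ψ (-(p * c k')) * (starRingEnd K) (g k'))
      = ∑ k, ∑ k', (∑ p, ψ (p * (c k - c k'))) * (g k * (starRingEnd K) (g k')) := by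
        rw [sum_comm]; refine sum_congr rfl fun k _ => ?_
        rw [sum_comm]; refine sum_congr rfl fun k' _ => ?_
        rw [sum_mul]; refine sum_congr rfl fun p _ => ?_
        rw [mul_sub, sub_eq_add_neg, map_add_eq_mul]; ring
    _ = ∑ k, Fintype.card R * (g k * (starRingEnd K) (g k)) := by
        simp_rw [sum_mulShift _ hψ, sub_eq_zero, hc.eq_iff]
        simp

end AddChar

theorem ZMod.isUnit_two_of_odd {N : ℕ} (hN : Odd N) : IsUnit (2 : ZMod N) := by
  simpa using (ZMod.isUnit_iff_coprime 2 N).mpr hN.coprime_two_left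

theorem ZMod.injective_two_mul_sub {N : ℕ} (hN : Odd N) (q : ZMod N) :
    Injective fun k : ZMod N => 2 * (k - q) :=
  (ZMod.isUnit_two_of_odd hN).mul_right_injective.comp sub_left_injective

theorem ZMod.bijective_add_self_sub {N : ℕ} [NeZero N] (hN : Odd N) (k : ZMod N) :
    Bijective fun q : ZMod N => q + q - k := by
  rw [← Finite.injective_iff_bijective]
  intro a b h
  exact (ZMod.isUnit_two_of_odd hN).mul_left_cancel (by linear_combination h)

theorem Matrix.trace_unitary_conj_mul_unitary_conj {n R : Type*} [Fintype n] [DecidableEq n]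
    [CommRing R] [StarRing R] {U : Matrix n n R} (hU : U ∈ unitaryGroup n R) (A X : Matrix n n R) :
    (U * A * Uᴴ * (U * X * Uᴴ)).trace = (A * X).trace := by
  have hUU : Uᴴ * U = 1 := hU.1
  calc (U * A * Uᴴ * (U * X * Uᴴ)).trace = (U * (A * (Uᴴ * U) * X) * Uᴴ).trace := by
        simp only [Matrix.mul_assoc]
    _ = (A * X).trace := by rw [trace_mul_cycle, hUU, Matrix.mul_one, Matrix.one_mul]

theorem marg_margInv {R : Type*} [CommRing R] (i : Fin 8) (v : R × R) :
    marg i (margInv i v) = v := by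
  fin_cases i <;> refine Prod.ext ?_ ?_ <;> simp [marg, margInv] <;> ring

section PhaseSpace

variable {N : ℕ} [NeZero N]

theorem omegaN_pow_val (a : ZMod N) : omegaN N ^ a.val = ZMod.stdAddChar a := by
  rw [omegaN, ← Complex.exp_nat_mul, ZMod.stdAddChar_apply, ZMod.toCircle_apply]
  congr 1
  ring

theorem boostOp_mul_shiftOp_apply (p q k l : ZMod N) :
    (boostOp N p * shiftOp N q) k l = if l = k - q then ZMod.stdAddChar (p * k) else 0 := by
  simp [boostOp, shiftOp, diagonal_mul, omegaN_pow_val, eq_sub_iff_add_eq, eq_comm]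

theorem phaseOp_eq_conj_boostOp_mul_shiftOp (a : ZMod N × ZMod N) :
    phaseOp N a =
      boostOp N a.1 * shiftOp N a.2 * parityOp N * (boostOp N a.1 * shiftOp N a.2)ᴴ := by
  rw [phaseOp, weylOp, conjTranspose_smul, smul_mul, Matrix.smul_mul, Matrix.mul_smul, smul_smul,
    RCLike.star_def, RCLike.mul_conj, omegaN_pow_val, AddChar.norm_apply]
  simp

theorem phaseOp_apply (p q k n : ZMod N) :
    phaseOp N (p, q) k n = if n = q + q - k then ZMod.stdAddChar (p * (k - n)) else 0 := by
  have hBP : ∀ m, (boostOp N p * shiftOp N q * parityOp N) k m =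
      if m = q - k then ZMod.stdAddChar (p * k) else 0 := by
    intro m
    rw [mul_apply]
    simp only [boostOp_mul_shiftOp_apply, sum_ite_eq', mem_univ, if_true,
      parityOp, of_apply, mul_ite, mul_one, mul_zero, neg_eq_iff_eq_neg, neg_sub]
  rw [phaseOp_eq_conj_boostOp_mul_shiftOp, mul_apply]
  simp only [hBP, conjTranspose_apply, boostOp_mul_shiftOp_apply, ite_mul, zero_mul, sum_ite_eq',
    mem_univ, if_true, apply_ite star, star_zero, mul_ite, mul_zero]
  refine if_congr ⟨fun h => by linear_combination h, fun h => by linear_combination h⟩ ?_ rfl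
  rw [RCLike.star_def, ← AddChar.map_neg_eq_conj, ← AddChar.map_add_eq_mul, mul_sub, sub_eq_add_neg]

theorem trace_phaseOp_mul (p q : ZMod N) (X : Matrix (ZMod N) (ZMod N) ℂ) :
    (phaseOp N (p, q) * X).trace = ∑ k, ZMod.stdAddChar (p * (2 * (k - q))) * X (q + q - k) k := by
  simp only [trace, Matrix.diag_apply, mul_apply, phaseOp_apply, ite_mul, zero_mul, sum_ite_eq',
    mem_univ, if_true]
  refine sum_congr rfl fun k _ => ?_
  congr 2; ring

variable (hN : Odd N)
include hN

theorem sum_trace_phaseOp_mul (X : Matrix (ZMod N) (ZMod N) ℂ) :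
    ∑ v, (phaseOp N v * X).trace = N * X.trace := by
  rw [Fintype.sum_prod_type, sum_comm]
  simp_rw [trace_phaseOp_mul]
  rw [trace, mul_sum]
  refine sum_congr rfl fun q _ => ?_
  rw [AddChar.sum_sum_apply_mul_comp_mul (ZMod.isPrimitive_stdAddChar N)
    (ZMod.injective_two_mul_sub hN q) (i₀ := q) (by rw [sub_self, mul_zero]), ZMod.card,
    add_sub_cancel_right, Matrix.diag_apply]

theorem sum_norm_sq_trace_phaseOp_mul (X : Matrix (ZMod N) (ZMod N) ℂ) :
    ∑ v, ‖(phaseOp N v * X).trace‖ ^ 2 = N * ∑ i, ∑ j, ‖X i j‖ ^ 2 := by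
  rw [Fintype.sum_prod_type, sum_comm]
  simp_rw [trace_phaseOp_mul, AddChar.sum_norm_sq_sum_apply_mul_comp_mul
    (ZMod.isPrimitive_stdAddChar N) (ZMod.injective_two_mul_sub hN _), ZMod.card]
  rw [← mul_sum, sum_comm, sum_comm (f := fun i j => ‖X i j‖ ^ 2)]
  congr 1
  refine sum_congr rfl fun k _ => ?_
  exact Fintype.sum_bijective _ (ZMod.bijective_add_self_sub hN k) _ _ fun _ => rfl

theorem sqrt_sum_norm_sq_trace_phaseOp_mul (X : Matrix (ZMod N) (ZMod N) ℂ) :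
    Real.sqrt (∑ v, ‖(phaseOp N v * X).trace‖ ^ 2) = Real.sqrt N * hsNorm X := by
  rw [sum_norm_sq_trace_phaseOp_mul hN, Real.sqrt_mul N.cast_nonneg, hsNorm]

end PhaseSpace

theorem trace_phaseOp_mul_margulis_channel {N : ℕ} [NeZero N]
    {U : Fin 8 → Matrix (ZMod N) (ZMod N) ℂ} (hU : ∀ i, U i ∈ unitaryGroup (ZMod N) ℂ)
    (hcov : ∀ i (v : ZMod N × ZMod N), U i * phaseOp N v * (U i)ᴴ = phaseOp N (marg i v))
    (X : Matrix (ZMod N) (ZMod N) ℂ) (v : ZMod N × ZMod N) :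
    (phaseOp N v * ((1 / 8 : ℂ) • ∑ i, U i * X * (U i)ᴴ)).trace =
      (1 / 8) * ∑ i, (phaseOp N (margInv i v) * X).trace := by
  rw [Matrix.mul_smul, trace_smul, mul_sum, trace_sum, smul_eq_mul]
  refine congrArg _ (sum_congr rfl fun i _ => ?_)
  have hv := hcov i (margInv i v)
  rw [marg_margInv] at hv
  rw [← hv, trace_unitary_conj_mul_unitary_conj (hU i)]

theorem quantum_margulis_expander_general (N : ℕ) [NeZero N] (hN : Odd N)
    (lam : ℝ)
    (U : Fin 8 → Matrix (ZMod N) (ZMod N) ℂ)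
    (hU : ∀ i, U i ∈ Matrix.unitaryGroup (ZMod N) ℂ)
    (hcov : ∀ i (v : ZMod N × ZMod N), U i * phaseOp N v * (U i)ᴴ = phaseOp N (marg i v))
    (hclass : ∀ f : ZMod N × ZMod N → ℂ, (∑ v, f v) = 0 →
      Real.sqrt (∑ v, ‖(1 / 8 : ℂ) * ∑ i : Fin 8, f (margInv i v)‖ ^ 2)
        ≤ lam * Real.sqrt (∑ v, ‖f v‖ ^ 2)) :
    ∀ X : Matrix (ZMod N) (ZMod N) ℂ, X.trace = 0 →
      hsNorm ((1 / 8 : ℂ) • ∑ i : Fin 8, U i * X * (U i)ᴴ) ≤ lam * hsNorm X := by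
  intro X hX
  have hwalk := hclass (fun v => (phaseOp N v * X).trace)
    (by rw [sum_trace_phaseOp_mul hN, hX, mul_zero])
  simp only [← trace_phaseOp_mul_margulis_channel hU hcov] at hwalk
  rw [sqrt_sum_norm_sq_trace_phaseOp_mul hN, sqrt_sum_norm_sq_trace_phaseOp_mul hN,
    mul_left_comm] at hwalk
  exact le_of_mul_le_mul_left hwalk (Real.sqrt_pos.mpr (Nat.cast_pos.mpr (NeZero.pos N)))

/-- if the classical Margulis walk `M_N` contracts mean-zero functions by
`λ` in `ℓ²`, then the quantum Margulis channel `Λ_N(ρ) = (1/8)·Σ_T U_T ρ U_T†` contracts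
traceless matrices by `λ` in Hilbert–Schmidt norm, i.e. it is an `(N,8,λ)`-quantum
expander. -/
theorem quantum_margulis_expander (N : ℕ) [NeZero N] (hN : Odd N)
    (lam : ℝ) (hlam : 0 ≤ lam)
    (U : Fin 8 → Matrix (ZMod N) (ZMod N) ℂ)
    (hU : ∀ i, U i ∈ Matrix.unitaryGroup (ZMod N) ℂ)
    (hcov : ∀ i (v : ZMod N × ZMod N), U i * phaseOp N v * (U i)ᴴ = phaseOp N (marg i v))
    (hclass : ∀ f : ZMod N × ZMod N → ℂ, (∑ v, f v) = 0 →
      Real.sqrt (∑ v, ‖(1 / 8 : ℂ) * ∑ i : Fin 8, f (margInv i v)‖ ^ 2)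
        ≤ lam * Real.sqrt (∑ v, ‖f v‖ ^ 2)) :
    ∀ X : Matrix (ZMod N) (ZMod N) ℂ, X.trace = 0 →
      hsNorm ((1 / 8 : ℂ) • ∑ i : Fin 8, U i * X * (U i)ᴴ) ≤ lam * hsNorm X :=
  quantum_margulis_expander_general N hN lam U hU hcov hclass
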